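/- arXiv:2309.09499 — 3 statements merged into one kernel-verified Lean document; each statement's English description precedes it below -/
import Mathlib

section
/- Let H be a complex Hilbert space, H₀ ⊆ H a closed subspace, H₁ := H₀ᗮ, and α = (α_ij) ∈ (0,∞)^{2×2}. Let (M_n) be a sequence in ℳ(α) that converges to some M ∈ L(H) in the strong operator topology. Then M ∈ ℳ(α), and the four Schur components converge in the weak operator topology: M_{n,00}⁻¹ → M₀₀⁻¹ in WOT on L(H₀), M_{n,10}M_{n,00}⁻¹ → M₁₀M₀₀⁻¹ in WOT on L(H₀,H₁), M_{n,00}⁻¹M_{n,01} → M₀₀⁻¹M₀₁ in WOT on L(H₁,H₀), and M_{n,11} − M_{n,10}M_{n,00}⁻¹M_{n,01} → M₁₁ − M₁₀M₀₀⁻¹M₀₁ in WOT on L(H₁); i.e. M_n → M in the nonlocal H-topology τ(H₀,H₁). -/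
noncomputable section
open Filter Topology ContinuousLinearMap

namespace Paper

/-- `Re S ≥ c` for a bounded operator on a complex Hilbert space:
`Re⟨Sφ,φ⟩ ≥ c‖φ‖²` for all `φ`. -/
def ReGE {K : Type*} [NormedAddCommGroup K] [InnerProductSpace ℂ K]
    (S : K →L[ℂ] K) (c : ℝ) : Prop :=
  ∀ φ : K, c * ‖φ‖ ^ 2 ≤ (inner ℂ (S φ) φ : ℂ).re

variable {H : Type*} [NormedAddCommGroup H] [InnerProductSpace ℂ H] [CompleteSpace H]

/-- Block components of `M ∈ L(H)` w.r.t. the orthogonal decomposition `H = H₀ ⊕ H₀ᗮ`: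
`M_ij = P_i ∘ M ∘ ι_j`. -/
def blk00 (H₀ : Submodule ℂ H) [CompleteSpace H₀] (M : H →L[ℂ] H) : H₀ →L[ℂ] H₀ :=
  (Submodule.orthogonalProjectionOnto H₀) ∘L M ∘L H₀.subtypeL

def blk01 (H₀ : Submodule ℂ H) [CompleteSpace H₀] (M : H →L[ℂ] H) : H₀ᗮ →L[ℂ] H₀ :=
  (Submodule.orthogonalProjectionOnto H₀) ∘L M ∘L H₀ᗮ.subtypeL

def blk10 (H₀ : Submodule ℂ H) [CompleteSpace H₀] (M : H →L[ℂ] H) : H₀ →L[ℂ] H₀ᗮ :=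
  (Submodule.orthogonalProjectionOnto H₀ᗮ) ∘L M ∘L H₀.subtypeL

def blk11 (H₀ : Submodule ℂ H) [CompleteSpace H₀] (M : H →L[ℂ] H) : H₀ᗮ →L[ℂ] H₀ᗮ :=
  (Submodule.orthogonalProjectionOnto H₀ᗮ) ∘L M ∘L H₀ᗮ.subtypeL

/-- `M₀₀⁻¹` (via `Ring.inverse`, which is the genuine inverse when `M₀₀` is invertible). -/
def schur00 (H₀ : Submodule ℂ H) [CompleteSpace H₀] (M : H →L[ℂ] H) : H₀ →L[ℂ] H₀ :=
  Ring.inverse (blk00 H₀ M)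

/-- `M₁₀M₀₀⁻¹`. -/
def schur10 (H₀ : Submodule ℂ H) [CompleteSpace H₀] (M : H →L[ℂ] H) : H₀ →L[ℂ] H₀ᗮ :=
  blk10 H₀ M ∘L schur00 H₀ M

/-- `M₀₀⁻¹M₀₁`. -/
def schur01 (H₀ : Submodule ℂ H) [CompleteSpace H₀] (M : H →L[ℂ] H) : H₀ᗮ →L[ℂ] H₀ :=
  schur00 H₀ M ∘L blk01 H₀ M

/-- `M₁₁ − M₁₀M₀₀⁻¹M₀₁`. -/
def schur11 (H₀ : Submodule ℂ H) [CompleteSpace H₀] (M : H →L[ℂ] H) : H₀ᗮ →L[ℂ] H₀ᗮ :=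
  blk11 H₀ M - blk10 H₀ M ∘L schur00 H₀ M ∘L blk01 H₀ M

/-- `M ∈ ℳ(H₀,H₁)`: both `M₀₀` and `M` are boundedly invertible. -/
def MemM (H₀ : Submodule ℂ H) [CompleteSpace H₀] (M : H →L[ℂ] H) : Prop :=
  IsUnit (blk00 H₀ M) ∧ IsUnit M

/-- `M ∈ ℳ(α)`. -/
def MemMa (H₀ : Submodule ℂ H) [CompleteSpace H₀] (a00 a01 a10 a11 : ℝ)
    (M : H →L[ℂ] H) : Prop :=
  MemM H₀ M ∧ ReGE (blk00 H₀ M) a00 ∧ ReGE (schur00 H₀ M) (1 / a11) ∧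
    ‖schur10 H₀ M‖ ≤ a10 ∧ ‖schur01 H₀ M‖ ≤ a01 ∧
    ReGE (schur11 H₀ M) a00 ∧ ReGE (Ring.inverse (schur11 H₀ M)) (1 / a11)

/-- The weak operator topology on `X →L[ℂ] Y`: the initial topology w.r.t. the maps
`T ↦ ⟨Tφ,ψ⟩` for `φ ∈ X`, `ψ ∈ Y`. -/
def wot (X Y : Type*) [NormedAddCommGroup X] [InnerProductSpace ℂ X]
    [NormedAddCommGroup Y] [InnerProductSpace ℂ Y] :
    TopologicalSpace (X →L[ℂ] Y) :=
  ⨅ (p : X × Y), TopologicalSpace.induced (fun T => (inner ℂ p.2 (T p.1) : ℂ)) inferInstance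

/-- The nonlocal H-topology (Schur topology) `τ(H₀,H₀ᗮ)`: the initial topology w.r.t.
the four Schur components, each carrying the weak operator topology. -/
def tau (H₀ : Submodule ℂ H) [CompleteSpace H₀] : TopologicalSpace (H →L[ℂ] H) :=
  TopologicalSpace.induced (schur00 H₀) (wot H₀ H₀) ⊓
    TopologicalSpace.induced (schur10 H₀) (wot H₀ ↥H₀ᗮ) ⊓
    TopologicalSpace.induced (schur01 H₀) (wot ↥H₀ᗮ H₀) ⊓
    TopologicalSpace.induced (schur11 H₀) (wot ↥H₀ᗮ ↥H₀ᗮ)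

/-! Coercivity `Re T ≥ c` passes to strong limits, makes `T` invertible and bounds `‖T⁻¹‖` by
`c⁻¹`. With uniformly bounded inverses, `Tₙ⁻¹ - T⁻¹ = Tₙ⁻¹ (T - Tₙ) T⁻¹` gives strong
convergence of the inverses, and by Banach–Steinhaus strongly convergent sequences can be
composed. So the four Schur components of `Mₙ` converge strongly to those of `M`, every
defining condition of `ℳ(α)` survives the limit, and `M` is invertible because `M₀₀` and its
Schur complement are. -/

-- The topologies are explicit arguments: as implicit or instance arguments they would not be
-- unified with the semireducible `tau` and `wot`.
theorem tendsto_nhds_inf_iff {α β : Type*} {l : Filter β} {f : β → α} {a : α}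
    (t₁ t₂ : TopologicalSpace α) :
    Tendsto f l (@nhds _ (t₁ ⊓ t₂) a) ↔
      Tendsto f l (@nhds _ t₁ a) ∧ Tendsto f l (@nhds _ t₂ a) := by
  rw [_root_.nhds_inf (t₁ := t₁) (t₂ := t₂), tendsto_inf]

theorem tendsto_nhds_induced_iff {α β γ : Type*} {l : Filter β} {f : β → α} {a : α}
    (g : α → γ) (t : TopologicalSpace γ) :
    Tendsto f l (@nhds _ (t.induced g) a) ↔ Tendsto (fun b => g (f b)) l (@nhds _ t (g a)) := by
  rw [nhds_induced, tendsto_comap_iff]; rfl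

def TendstoSOT {X Y : Type*} [NormedAddCommGroup X] [NormedSpace ℂ X]
    [NormedAddCommGroup Y] [NormedSpace ℂ Y] (Tn : ℕ → X →L[ℂ] Y) (T : X →L[ℂ] Y) : Prop :=
  ∀ x, Tendsto (fun n => Tn n x) atTop (𝓝 (T x))

section NormedSpace

variable {W X Y Z : Type*} [NormedAddCommGroup W] [NormedSpace ℂ W]
  [NormedAddCommGroup X] [NormedSpace ℂ X] [NormedAddCommGroup Y] [NormedSpace ℂ Y]
  [NormedAddCommGroup Z] [NormedSpace ℂ Z]

theorem _root_.IsUnit.apply_ringInverse_apply {T : X →L[ℂ] X} (h : IsUnit T) (x : X) :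
    T (Ring.inverse T x) = x :=
  DFunLike.congr_fun (Ring.mul_inverse_cancel T h) x

theorem _root_.IsUnit.ringInverse_apply_apply {T : X →L[ℂ] X} (h : IsUnit T) (x : X) :
    Ring.inverse T (T x) = x :=
  DFunLike.congr_fun (Ring.inverse_mul_cancel T h) x

namespace TendstoSOT

variable {Tn : ℕ → X →L[ℂ] Y} {T : X →L[ℂ] Y}

theorem exists_norm_le [CompleteSpace X] (h : TendstoSOT Tn T) : ∃ C, ∀ n, ‖Tn n‖ ≤ C :=
  banach_steinhaus fun x => by
    obtain ⟨C, hC⟩ := (h x).norm.bddAbove_range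
    exact ⟨C, fun n => hC ⟨n, rfl⟩⟩

theorem opNorm_le {c : ℝ} (h : TendstoSOT Tn T) (hc : ∀ n, ‖Tn n‖ ≤ c) : ‖T‖ ≤ c :=
  T.opNorm_le_bound ((norm_nonneg _).trans (hc 0)) fun x =>
    le_of_tendsto' (h x).norm fun n => (Tn n).le_of_opNorm_le (hc n) x

theorem sub {Sn : ℕ → X →L[ℂ] Y} {S : X →L[ℂ] Y} (hS : TendstoSOT Sn S) (hT : TendstoSOT Tn T) :
    TendstoSOT (fun n => Sn n - Tn n) (S - T) :=
  fun x => (hS x).sub (hT x)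

theorem clm_comp_comp (L : Y →L[ℂ] Z) (R : W →L[ℂ] X) (h : TendstoSOT Tn T) :
    TendstoSOT (fun n => L ∘L Tn n ∘L R) (L ∘L T ∘L R) :=
  fun x => (L.continuous.tendsto _).comp (h (R x))

theorem comp [CompleteSpace Y] {Sn : ℕ → Y →L[ℂ] Z} {S : Y →L[ℂ] Z}
    (hS : TendstoSOT Sn S) (hT : TendstoSOT Tn T) :
    TendstoSOT (fun n => Sn n ∘L Tn n) (S ∘L T) := by
  intro x
  obtain ⟨C, hC⟩ := hS.exists_norm_le
  have hsplit : ∀ n, Sn n (Tn n x) - S (T x) = Sn n (Tn n x - T x) + (Sn n (T x) - S (T x)) :=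
    fun n => by rw [map_sub]; abel
  have hbound : ∀ n, ‖Sn n (Tn n x) - S (T x)‖ ≤ C * ‖Tn n x - T x‖ + ‖Sn n (T x) - S (T x)‖ :=
    fun n => (hsplit n ▸ norm_add_le _ _).trans
      (add_le_add ((Sn n).le_of_opNorm_le (hC n) _) le_rfl)
  rw [tendsto_iff_norm_sub_tendsto_zero]
  refine squeeze_zero (fun _ => norm_nonneg _) hbound ?_
  simpa using ((tendsto_iff_norm_sub_tendsto_zero.mp (hT x)).const_mul C).add
    (tendsto_iff_norm_sub_tendsto_zero.mp (hS (T x)))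

theorem ringInverse {Tn : ℕ → X →L[ℂ] X} {T : X →L[ℂ] X} {C : ℝ} (h : TendstoSOT Tn T)
    (hTn : ∀ n, IsUnit (Tn n)) (hT : IsUnit T) (hC : ∀ n, ‖Ring.inverse (Tn n)‖ ≤ C) :
    TendstoSOT (fun n => Ring.inverse (Tn n)) (Ring.inverse T) := by
  intro x
  set y := Ring.inverse T x
  have hdiff : ∀ n, Ring.inverse (Tn n) x - y = Ring.inverse (Tn n) (T y - Tn n y) := fun n => by
    rw [map_sub, (hTn n).ringInverse_apply_apply, hT.apply_ringInverse_apply]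
  have hbound : ∀ n, ‖Ring.inverse (Tn n) x - y‖ ≤ C * ‖T y - Tn n y‖ :=
    fun n => hdiff n ▸ (Ring.inverse (Tn n)).le_of_opNorm_le (hC n) _
  rw [tendsto_iff_norm_sub_tendsto_zero]
  refine squeeze_zero (fun _ => norm_nonneg _) hbound ?_
  simpa [norm_sub_rev] using (tendsto_iff_norm_sub_tendsto_zero.mp (h y)).const_mul C

end TendstoSOT

end NormedSpace

section InnerProductSpace

variable {K X Y : Type*} [NormedAddCommGroup K] [InnerProductSpace ℂ K]
  [NormedAddCommGroup X] [InnerProductSpace ℂ X] [NormedAddCommGroup Y] [InnerProductSpace ℂ Y]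
  {S : K →L[ℂ] K} {c : ℝ}

theorem ReGE.le_norm_inner (h : ReGE S c) (hc : 0 ≤ c) (φ : K) :
    ‖φ‖ ^ 2 * c.toNNReal ≤ ‖inner ℂ (S φ) φ‖ := by
  rw [Real.coe_toNNReal c hc, mul_comm]
  exact (h φ).trans (Complex.re_le_norm _)

theorem ReGE.antilipschitz (h : ReGE S c) (hc : 0 < c) : AntilipschitzWith c.toNNReal⁻¹ S :=
  S.antilipschitz_of_forall_le_inner_map (Real.toNNReal_pos.2 hc) (h.le_norm_inner hc.le)

theorem ReGE.isUnit [CompleteSpace K] (h : ReGE S c) (hc : 0 < c) : IsUnit S :=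
  S.isUnit_of_forall_le_norm_inner_map (Real.toNNReal_pos.2 hc) (h.le_norm_inner hc.le)

theorem ReGE.norm_ringInverse_le [CompleteSpace K] (h : ReGE S c) (hc : 0 < c) :
    ‖Ring.inverse S‖ ≤ c⁻¹ := by
  refine opNorm_le_bound _ (inv_nonneg.2 hc.le) fun ψ => ?_
  simpa [(h.isUnit hc).apply_ringInverse_apply, hc.le] using
    (h.antilipschitz hc).le_mul_norm (map_zero S) (Ring.inverse S ψ)

theorem TendstoSOT.reGE {Tn : ℕ → K →L[ℂ] K} (h : TendstoSOT Tn S) (hc : ∀ n, ReGE (Tn n) c) :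
    ReGE S c := fun φ =>
  ge_of_tendsto' ((Complex.continuous_re.tendsto _).comp ((h φ).inner tendsto_const_nhds))
    fun n => hc n φ

theorem TendstoSOT.ringInverse_of_reGE [CompleteSpace K] {Tn : ℕ → K →L[ℂ] K}
    (h : TendstoSOT Tn S) (hc : 0 < c) (hTn : ∀ n, ReGE (Tn n) c) :
    TendstoSOT (fun n => Ring.inverse (Tn n)) (Ring.inverse S) :=
  h.ringInverse (fun n => (hTn n).isUnit hc) ((h.reGE hTn).isUnit hc)
    fun n => (hTn n).norm_ringInverse_le hc

theorem TendstoSOT.tendsto_wot {Tn : ℕ → X →L[ℂ] Y} {T : X →L[ℂ] Y} (h : TendstoSOT Tn T) :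
    Tendsto Tn atTop (@nhds _ (wot X Y) T) := by
  rw [wot, _root_.nhds_iInf, tendsto_iInf]
  exact fun p => (tendsto_nhds_induced_iff _ _).2 (tendsto_const_nhds.inner (h p.1))

end InnerProductSpace

section Blocks

variable {E : Type*} [NormedAddCommGroup E] [InnerProductSpace ℂ E]
  (H₀ : Submodule ℂ E) [CompleteSpace H₀]

theorem add_orthogonalProjectionOnto_orthogonal (x : E) :
    (H₀.orthogonalProjectionOnto x : E) + H₀ᗮ.orthogonalProjectionOnto x = x := by
  simpa only [Submodule.starProjection_apply] using
    H₀.starProjection_add_starProjection_orthogonal x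

theorem eq_of_orthogonalProjectionOnto_eq {x y : E}
    (h₀ : H₀.orthogonalProjectionOnto x = H₀.orthogonalProjectionOnto y)
    (h₁ : H₀ᗮ.orthogonalProjectionOnto x = H₀ᗮ.orthogonalProjectionOnto y) : x = y := by
  rw [← add_orthogonalProjectionOnto_orthogonal H₀ x, h₀, h₁,
    add_orthogonalProjectionOnto_orthogonal]

theorem orthogonalProjectionOnto_apply_add (M : E →L[ℂ] E) (a : H₀) (b : H₀ᗮ) :
    H₀.orthogonalProjectionOnto (M (a + b)) = blk00 H₀ M a + blk01 H₀ M b := by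
  rw [map_add, map_add]; rfl

theorem orthogonalProjectionOnto_orthogonal_apply_add (M : E →L[ℂ] E) (a : H₀) (b : H₀ᗮ) :
    H₀ᗮ.orthogonalProjectionOnto (M (a + b)) = blk10 H₀ M a + blk11 H₀ M b := by
  rw [map_add, map_add]; rfl

theorem isUnit_of_isUnit_blk00_of_isUnit_schur11 [CompleteSpace E] {M : E →L[ℂ] E}
    (hA : IsUnit (blk00 H₀ M)) (hS : IsUnit (schur11 H₀ M)) : IsUnit M := by
  set A := blk00 H₀ M
  set S := schur11 H₀ M
  have hS_apply : ∀ b, S b = blk11 H₀ M b - blk10 H₀ M (Ring.inverse A (blk01 H₀ M b)) :=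
    fun _ => rfl
  rw [ContinuousLinearMap.isUnit_iff_bijective]
  constructor
  · rw [injective_iff_map_eq_zero]
    intro x hx
    rw [← add_orthogonalProjectionOnto_orthogonal H₀ x] at hx ⊢
    set a := H₀.orthogonalProjectionOnto x
    set b := H₀ᗮ.orthogonalProjectionOnto x
    have h₀ : A a + blk01 H₀ M b = 0 := by
      rw [← orthogonalProjectionOnto_apply_add, hx, map_zero]
    have h₁ : blk10 H₀ M a + blk11 H₀ M b = 0 := by
      rw [← orthogonalProjectionOnto_orthogonal_apply_add, hx, map_zero]
    have ha : a = -Ring.inverse A (blk01 H₀ M b) := by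
      rw [← hA.ringInverse_apply_apply a, eq_neg_iff_add_eq_zero, ← map_add, h₀, map_zero]
    have hSb : S b = 0 := by
      rw [hS_apply, ← h₁, ha, map_neg]; abel
    have hb : b = 0 := by
      rw [← hS.ringInverse_apply_apply b, hSb, map_zero]
    simp [ha, hb]
  · intro y
    set b := Ring.inverse S
      (H₀ᗮ.orthogonalProjectionOnto y - blk10 H₀ M (Ring.inverse A (H₀.orthogonalProjectionOnto y)))
    set a := Ring.inverse A (H₀.orthogonalProjectionOnto y - blk01 H₀ M b)
    refine ⟨a + b, eq_of_orthogonalProjectionOnto_eq H₀ ?_ ?_⟩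
    · rw [orthogonalProjectionOnto_apply_add, hA.apply_ringInverse_apply]; abel
    · have hDb : blk11 H₀ M b = S b + blk10 H₀ M (Ring.inverse A (blk01 H₀ M b)) := by
        rw [hS_apply]; abel
      rw [orthogonalProjectionOnto_orthogonal_apply_add, hDb, hS.apply_ringInverse_apply]
      simp only [a, map_sub]
      abel

variable {H₀}

theorem TendstoSOT.blk00 {Mn : ℕ → E →L[ℂ] E} {M : E →L[ℂ] E} (h : TendstoSOT Mn M) :
    TendstoSOT (fun n => blk00 H₀ (Mn n)) (blk00 H₀ M) :=
  h.clm_comp_comp _ _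

theorem TendstoSOT.blk01 {Mn : ℕ → E →L[ℂ] E} {M : E →L[ℂ] E} (h : TendstoSOT Mn M) :
    TendstoSOT (fun n => blk01 H₀ (Mn n)) (blk01 H₀ M) :=
  h.clm_comp_comp _ _

theorem TendstoSOT.blk10 {Mn : ℕ → E →L[ℂ] E} {M : E →L[ℂ] E} (h : TendstoSOT Mn M) :
    TendstoSOT (fun n => blk10 H₀ (Mn n)) (blk10 H₀ M) :=
  h.clm_comp_comp _ _

theorem TendstoSOT.blk11 {Mn : ℕ → E →L[ℂ] E} {M : E →L[ℂ] E} (h : TendstoSOT Mn M) :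
    TendstoSOT (fun n => blk11 H₀ (Mn n)) (blk11 H₀ M) :=
  h.clm_comp_comp _ _

theorem tendsto_tau_of_tendsto_wot {ι : Type*} {l : Filter ι} {f : ι → E →L[ℂ] E}
    {M : E →L[ℂ] E}
    (h00 : Tendsto (fun i => schur00 H₀ (f i)) l (@nhds _ (wot H₀ H₀) (schur00 H₀ M)))
    (h10 : Tendsto (fun i => schur10 H₀ (f i)) l (@nhds _ (wot H₀ H₀ᗮ) (schur10 H₀ M)))
    (h01 : Tendsto (fun i => schur01 H₀ (f i)) l (@nhds _ (wot H₀ᗮ H₀) (schur01 H₀ M)))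
    (h11 : Tendsto (fun i => schur11 H₀ (f i)) l (@nhds _ (wot H₀ᗮ H₀ᗮ) (schur11 H₀ M))) :
    Tendsto f l (@nhds _ (tau H₀) M) :=
  (tendsto_nhds_inf_iff _ _).2 ⟨(tendsto_nhds_inf_iff _ _).2 ⟨(tendsto_nhds_inf_iff _ _).2
    ⟨(tendsto_nhds_induced_iff _ _).2 h00, (tendsto_nhds_induced_iff _ _).2 h10⟩,
    (tendsto_nhds_induced_iff _ _).2 h01⟩, (tendsto_nhds_induced_iff _ _).2 h11⟩

end Blocks

theorem statement_0_general (H₀ : Submodule ℂ H) [CompleteSpace H₀]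
    (a00 a01 a10 a11 : ℝ) (ha00 : 0 < a00)
    (Mn : ℕ → H →L[ℂ] H) (hMn : ∀ n, MemMa H₀ a00 a01 a10 a11 (Mn n))
    (M : H →L[ℂ] H)
    (hsot : ∀ x : H, Tendsto (fun n => Mn n x) atTop (𝓝 (M x))) :
    MemMa H₀ a00 a01 a10 a11 M ∧
    Tendsto (fun n => schur00 H₀ (Mn n)) atTop (@nhds _ (wot H₀ H₀) (schur00 H₀ M)) ∧
    Tendsto (fun n => schur10 H₀ (Mn n)) atTop (@nhds _ (wot H₀ ↥H₀ᗮ) (schur10 H₀ M)) ∧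
    Tendsto (fun n => schur01 H₀ (Mn n)) atTop (@nhds _ (wot ↥H₀ᗮ H₀) (schur01 H₀ M)) ∧
    Tendsto (fun n => schur11 H₀ (Mn n)) atTop (@nhds _ (wot ↥H₀ᗮ ↥H₀ᗮ) (schur11 H₀ M)) ∧
    Tendsto Mn atTop (@nhds _ (tau H₀) M) := by
  have h : TendstoSOT Mn M := hsot
  have hA : ∀ n, ReGE (blk00 H₀ (Mn n)) a00 := fun n => (hMn n).2.1
  have hS : ∀ n, ReGE (schur11 H₀ (Mn n)) a00 := fun n => (hMn n).2.2.2.2.2.1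
  have h00 : TendstoSOT (fun n => schur00 H₀ (Mn n)) (schur00 H₀ M) :=
    h.blk00.ringInverse_of_reGE ha00 hA
  have h10 : TendstoSOT (fun n => schur10 H₀ (Mn n)) (schur10 H₀ M) := h.blk10.comp h00
  have h01 : TendstoSOT (fun n => schur01 H₀ (Mn n)) (schur01 H₀ M) := h00.comp h.blk01
  have h11 : TendstoSOT (fun n => schur11 H₀ (Mn n)) (schur11 H₀ M) :=
    h.blk11.sub (h.blk10.comp h01)
  have hA_lim := h.blk00.reGE hA
  have hS_lim := h11.reGE hS
  have hM : MemMa H₀ a00 a01 a10 a11 M :=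
    ⟨⟨hA_lim.isUnit ha00,
        isUnit_of_isUnit_blk00_of_isUnit_schur11 H₀ (hA_lim.isUnit ha00) (hS_lim.isUnit ha00)⟩,
      hA_lim, h00.reGE fun n => (hMn n).2.2.1, h10.opNorm_le fun n => (hMn n).2.2.2.1,
      h01.opNorm_le fun n => (hMn n).2.2.2.2.1, hS_lim,
      (h11.ringInverse_of_reGE ha00 hS).reGE fun n => (hMn n).2.2.2.2.2.2⟩
  exact ⟨hM, h00.tendsto_wot, h10.tendsto_wot, h01.tendsto_wot, h11.tendsto_wot,
    tendsto_tau_of_tendsto_wot h00.tendsto_wot h10.tendsto_wot h01.tendsto_wot h11.tendsto_wot⟩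

/-- If a sequence in `ℳ(α)` converges in the strong operator topology to
`M ∈ L(H)`, then `M ∈ ℳ(α)` and the four Schur components converge in the weak operator
topology, i.e. `Mₙ → M` in the nonlocal H-topology `τ(H₀,H₁)`. -/
theorem statement_0 (H₀ : Submodule ℂ H) [CompleteSpace H₀]
    (a00 a01 a10 a11 : ℝ) (ha00 : 0 < a00) (ha01 : 0 < a01) (ha10 : 0 < a10)
    (ha11 : 0 < a11)
    (Mn : ℕ → H →L[ℂ] H) (hMn : ∀ n, MemMa H₀ a00 a01 a10 a11 (Mn n))
    (M : H →L[ℂ] H)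
    (hsot : ∀ x : H, Tendsto (fun n => Mn n x) atTop (𝓝 (M x))) :
    MemMa H₀ a00 a01 a10 a11 M ∧
    Tendsto (fun n => schur00 H₀ (Mn n)) atTop (@nhds _ (wot H₀ H₀) (schur00 H₀ M)) ∧
    Tendsto (fun n => schur10 H₀ (Mn n)) atTop (@nhds _ (wot H₀ ↥H₀ᗮ) (schur10 H₀ M)) ∧
    Tendsto (fun n => schur01 H₀ (Mn n)) atTop (@nhds _ (wot ↥H₀ᗮ H₀) (schur01 H₀ M)) ∧
    Tendsto (fun n => schur11 H₀ (Mn n)) atTop (@nhds _ (wot ↥H₀ᗮ ↥H₀ᗮ) (schur11 H₀ M)) ∧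
    Tendsto Mn atTop (@nhds _ (tau H₀) M) :=
  statement_0_general H₀ a00 a01 a10 a11 ha00 Mn hMn M hsot

end Paper
end
end

section
/- Let H be a complex Hilbert space and A : dom(A) ⊆ H → H a skew-selfadjoint operator with H₀ := ker A and closed range H₁ := ran A = (ker A)ᗮ, and let Ã : dom(A) ∩ H₁ ⊆ H₁ → H₁ denote the restriction of A. Let T ∈ L(H) with block components T_ij, and assume T₀₀ is boundedly invertible and Re(T₁₁ − T₁₀T₀₀⁻¹T₀₁) ≥ c for some c > 0. Then T_A := T₁₁ − T₁₀T₀₀⁻¹T₀₁ + Ã (domain dom(A) ∩ H₁) is boundedly invertible on H₁ with ‖T_A⁻¹‖ ≤ 1/c and ‖Ã T_A⁻¹‖ ≤ 1 + ‖T₁₁ − T₁₀T₀₀⁻¹T₀₁‖/c, the operator T + A (with domain dom(A)) is boundedly invertible on H, and (T+A)⁻¹ is given blockwise by [[T₀₀⁻¹ + T₀₀⁻¹T₀₁T_A⁻¹T₁₀T₀₀⁻¹, −T₀₀⁻¹T₀₁T_A⁻¹], [−T_A⁻¹T₁₀T₀₀⁻¹, T_A⁻¹]]. -/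
/-!
For the Schur complement `S = T₁₁ − T₁₀T₀₀⁻¹T₀₁`, skew-adjointness of `Ã` gives
`Re⟪(S + Ã)u, u⟫ = Re⟪S u, u⟫ ≥ c‖u‖²`, so `S + Ã` is injective with inverse bounded by `1/c`.
Its range is closed because `Ã` is closed, and dense because a vector `y` orthogonal to it lies in
`dom Ã` with `Ã y = S* y`, which forces `Re⟪S y, y⟫ = 0`. The compression `Ã` is skew-adjoint
because `A` vanishes on `H₀ = ker A`, so `A` only sees the `H₁`-component of its argument. For the
same reason `T + A` is the block operator `[[T₀₀, T₀₁], [T₁₀, T₁₁ + Ã]]`, and block Gaussian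
elimination through `T₀₀⁻¹` reduces its inversion to that of `S + Ã`.
-/

noncomputable section
open Filter Topology ContinuousLinearMap

namespace Paper

variable {H : Type*} [NormedAddCommGroup H] [InnerProductSpace ℂ H] [CompleteSpace H]

/-- `B ∈ L(H)` is a (two-sided) bounded inverse of the (possibly unbounded) linear
operator `S`. -/
def IsBoundedInverse {H : Type*} [NormedAddCommGroup H] [InnerProductSpace ℂ H]
    (S : H →ₗ.[ℂ] H) (B : H →L[ℂ] H) : Prop :=
  (∀ u : S.domain, B (S u) = (u : H)) ∧
    ∀ y : H, ∃ hy : B y ∈ S.domain, S ⟨B y, hy⟩ = y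

/-- The operator `T + A` with domain `dom(A)`, for `T` bounded and `A` a linear
operator with domain `A.domain`. -/
def addA {H : Type*} [NormedAddCommGroup H] [InnerProductSpace ℂ H]
    (T : H →L[ℂ] H) (A : H →ₗ.[ℂ] H) : H →ₗ.[ℂ] H :=
  (T : H →ₗ[ℂ] H).toPMap A.domain + A

namespace SkewAdjoint

variable {𝕜 E : Type*} [RCLike 𝕜] [NormedAddCommGroup E] [InnerProductSpace 𝕜 E]
  [CompleteSpace E] {C : E →ₗ.[𝕜] E}

theorem inner_apply_left (hd : Dense (C.domain : Set E)) (hC : C.adjoint = -C)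
    (x y : C.domain) : inner 𝕜 (C x) (y : E) = -inner 𝕜 (x : E) (C y) := by
  have h := (hC ▸ LinearPMap.adjoint_isFormalAdjoint hd : (-C).IsFormalAdjoint C) x y
  rw [LinearPMap.neg_apply, inner_neg_left] at h
  exact neg_eq_iff_eq_neg.mp h

theorem re_inner_apply_self (hd : Dense (C.domain : Set E)) (hC : C.adjoint = -C)
    (x : C.domain) : RCLike.re (inner 𝕜 (C x) (x : E)) = 0 := by
  have h := congrArg RCLike.re (inner_apply_left hd hC x x)
  rw [← inner_conj_symm (x : E), map_neg, RCLike.conj_re] at h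
  linarith

theorem exists_apply_eq_neg (hd : Dense (C.domain : Set E)) (hC : C.adjoint = -C)
    {x w : E} (h : ∀ v : C.domain, inner 𝕜 w (v : E) = inner 𝕜 x (C v)) :
    ∃ hx : x ∈ C.domain, C ⟨x, hx⟩ = -w := by
  have hx : x ∈ C.adjoint.domain := LinearPMap.mem_adjoint_domain_of_exists _ ⟨w, h⟩
  have hle : C.adjoint ≤ -C := hC.le
  refine ⟨hle.1 hx, ?_⟩
  rw [← neg_neg (C _), ← LinearPMap.neg_apply, ← hle.2 (x := ⟨x, hx⟩) rfl,
    LinearPMap.adjoint_apply_eq hd ⟨x, hx⟩ h]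

theorem exists_apply_eq_of_tendsto (hd : Dense (C.domain : Set E)) (hC : C.adjoint = -C)
    {u : ℕ → C.domain} {x f : E} (hux : Tendsto (fun n => (u n : E)) atTop (𝓝 x))
    (huf : Tendsto (fun n => C (u n)) atTop (𝓝 f)) :
    ∃ hx : x ∈ C.domain, C ⟨x, hx⟩ = f := by
  suffices h : ∀ v : C.domain, inner 𝕜 (-f) (v : E) = inner 𝕜 x (C v) by
    simpa using exists_apply_eq_neg hd hC h
  intro v
  have hlim : Tendsto (fun n => inner 𝕜 (C (u n)) (v : E)) atTop
      (𝓝 (-inner 𝕜 x (C v))) := by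
    simp_rw [inner_apply_left hd hC]
    exact (hux.inner tendsto_const_nhds).neg
  rw [inner_neg_left, tendsto_nhds_unique (huf.inner tendsto_const_nhds) hlim, neg_neg]

end SkewAdjoint

section BoundedInverse

variable {E : Type*} [NormedAddCommGroup E] [InnerProductSpace ℂ E]

theorem mem_domain_addA {S : E →L[ℂ] E} {C : E →ₗ.[ℂ] E} {x : E} :
    x ∈ (addA S C).domain ↔ x ∈ C.domain :=
  Submodule.mem_inf.trans and_self_iff

theorem addA_apply (S : E →L[ℂ] E) (C : E →ₗ.[ℂ] E) {x : E} (hx : x ∈ (addA S C).domain) :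
    addA S C ⟨x, hx⟩ = S x + C ⟨x, mem_domain_addA.1 hx⟩ :=
  rfl

theorem exists_isBoundedInverse_of_le_norm {L : E →ₗ.[ℂ] E} {c : ℝ} (hc : 0 < c)
    (hL : ∀ x : L.domain, c * ‖(x : E)‖ ≤ ‖L x‖) (hsurj : Function.Surjective L) :
    ∃ B : E →L[ℂ] E, ‖B‖ ≤ 1 / c ∧ IsBoundedInverse L B := by
  have hinj : Function.Injective L := by
    refine (injective_iff_map_eq_zero L.toFun).2 fun x (hx : L x = 0) => ?_
    have := hL x
    rw [hx, norm_zero] at this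
    exact Subtype.ext (norm_le_zero_iff.1 (nonpos_of_mul_nonpos_right this hc))
  let e := LinearEquiv.ofBijective L.toFun ⟨hinj, hsurj⟩
  have hbound : ∀ y, ‖L.domain.subtype (e.symm y)‖ ≤ 1 / c * ‖y‖ := fun y => by
    rw [one_div, ← div_eq_inv_mul, le_div_iff₀' hc]
    have h := hL (e.symm y)
    rwa [show L (e.symm y) = y from e.apply_symm_apply y] at h
  refine ⟨(L.domain.subtype ∘ₗ e.symm.toLinearMap).mkContinuous (1 / c) hbound,
    LinearMap.mkContinuous_norm_le _ (by positivity) _, fun x => ?_, fun y => ⟨(e.symm y).2, ?_⟩⟩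
  · exact congrArg Subtype.val (e.symm_apply_apply x)
  · exact e.apply_symm_apply y

theorem norm_apply_le_of_isBoundedInverse_addA {S : E →L[ℂ] E} {C : E →ₗ.[ℂ] E} {c : ℝ}
    {B : E →L[ℂ] E} (hB : IsBoundedInverse (addA S C) B) (hBc : ‖B‖ ≤ 1 / c) (y : E)
    (hy : B y ∈ C.domain) :
    ‖C ⟨B y, hy⟩‖ ≤ (1 + ‖S‖ / c) * ‖y‖ := by
  obtain ⟨hy', hBy⟩ := hB.2 y
  have hCB : C ⟨B y, hy⟩ = y - S (B y) := eq_sub_of_add_eq' hBy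
  calc ‖C ⟨B y, hy⟩‖ = ‖y - S (B y)‖ := by rw [hCB]
    _ ≤ ‖y‖ + ‖S‖ * (‖B‖ * ‖y‖) := by
        refine (norm_sub_le _ _).trans (add_le_add_right ((S.le_opNorm _).trans ?_) _)
        gcongr
        exact B.le_opNorm y
    _ ≤ ‖y‖ + ‖S‖ * (1 / c * ‖y‖) := by gcongr
    _ = (1 + ‖S‖ / c) * ‖y‖ := by ring

end BoundedInverse

section Coercive

variable {E : Type*} [NormedAddCommGroup E] [InnerProductSpace ℂ E] [CompleteSpace E]
  {S : E →L[ℂ] E} {C : E →ₗ.[ℂ] E} {c : ℝ}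

theorem le_norm_addA_apply (hd : Dense (C.domain : Set E)) (hC : C.adjoint = -C)
    (hS : ReGE S c) (x : (addA S C).domain) : c * ‖(x : E)‖ ≤ ‖addA S C x‖ := by
  have hre : (inner ℂ (addA S C x) (x : E)).re = (inner ℂ (S x) (x : E)).re := by
    have := SkewAdjoint.re_inner_apply_self hd hC ⟨x, mem_domain_addA.1 x.2⟩
    rw [RCLike.re_to_complex] at this
    rw [addA_apply, inner_add_left, Complex.add_re, this, add_zero]
  have key : c * ‖(x : E)‖ * ‖(x : E)‖ ≤ ‖addA S C x‖ * ‖(x : E)‖ :=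
    calc c * ‖(x : E)‖ * ‖(x : E)‖ = c * ‖(x : E)‖ ^ 2 := by ring
      _ ≤ (inner ℂ (addA S C x) (x : E)).re := hre ▸ hS x
      _ ≤ ‖addA S C x‖ * ‖(x : E)‖ := re_inner_le_norm (𝕜 := ℂ) _ _
  rcases (norm_nonneg (x : E)).eq_or_lt with hx | hx
  · rw [← hx, mul_zero]
    exact norm_nonneg _
  · exact le_of_mul_le_mul_right key hx

theorem isClosed_range_addA (hd : Dense (C.domain : Set E)) (hC : C.adjoint = -C)
    (hS : ReGE S c) (hc : 0 < c) :
    IsClosed (LinearMap.range (addA S C).toFun : Set E) := by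
  refine IsSeqClosed.isClosed fun z y hz hzy => ?_
  choose p hp using hz
  replace hp : ∀ n, addA S C (p n) = z n := hp
  have hdist : ∀ m n, dist (p m : E) (p n) ≤ dist (z m) (z n) / c := fun m n => by
    rw [dist_eq_norm, dist_eq_norm, le_div_iff₀' hc, ← hp, ← hp, ← LinearPMap.map_sub]
    exact le_norm_addA_apply hd hC hS (p m - p n)
  have hcauchy : CauchySeq fun n => (p n : E) := by
    obtain ⟨b, hb0, hb, hlim⟩ := cauchySeq_iff_le_tendsto_0.1 hzy.cauchySeq
    refine cauchySeq_iff_le_tendsto_0.2 ⟨fun N => b N / c, fun N => div_nonneg (hb0 N) hc.le,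
      fun m n N hm hn => (hdist m n).trans (div_le_div_of_nonneg_right (hb m n N hm hn) hc.le), ?_⟩
    simpa using hlim.div_const c
  obtain ⟨w, hw⟩ := cauchySeq_tendsto_of_complete hcauchy
  have hCp : Tendsto (fun n => C ⟨p n, mem_domain_addA.1 (p n).2⟩) atTop (𝓝 (y - S w)) := by
    have hCp_eq : ∀ n, C ⟨p n, mem_domain_addA.1 (p n).2⟩ = z n - S (p n) := fun n =>
      eq_sub_of_add_eq' (hp n)
    simp only [hCp_eq]
    exact hzy.sub ((S.continuous.tendsto w).comp hw)
  obtain ⟨hwd, hCw⟩ := SkewAdjoint.exists_apply_eq_of_tendsto hd hC hw hCp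
  exact ⟨⟨w, mem_domain_addA.2 hwd⟩, by
    change addA S C ⟨w, _⟩ = y
    rw [addA_apply, hCw, add_sub_cancel]⟩

theorem orthogonal_range_addA_eq_bot (hd : Dense (C.domain : Set E)) (hC : C.adjoint = -C)
    (hS : ReGE S c) (hc : 0 < c) : (LinearMap.range (addA S C).toFun)ᗮ = ⊥ := by
  refine (Submodule.eq_bot_iff _).2 fun y hy => ?_
  have hperp : ∀ v : C.domain, inner ℂ (-(S.adjoint y)) (v : E) = inner ℂ y (C v) := by
    intro v
    have h0 : inner ℂ y (S v + C v) = 0 :=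
      (Submodule.mem_orthogonal' _ _).1 hy _ ⟨⟨v, mem_domain_addA.2 v.2⟩, rfl⟩
    rw [inner_add_right, ← ContinuousLinearMap.adjoint_inner_left] at h0
    rw [inner_neg_left, neg_eq_iff_add_eq_zero, h0]
  obtain ⟨hyd, hCy⟩ := SkewAdjoint.exists_apply_eq_neg hd hC hperp
  have hre : (inner ℂ (S y) y).re = 0 := by
    have := SkewAdjoint.re_inner_apply_self hd hC ⟨y, hyd⟩
    rwa [hCy, neg_neg, ContinuousLinearMap.adjoint_inner_left, inner_re_symm,
      RCLike.re_to_complex] at this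
  have hy0 : c * ‖y‖ ^ 2 ≤ 0 := hre ▸ hS y
  have : ‖y‖ ^ 2 ≤ 0 := nonpos_of_mul_nonpos_right hy0 hc
  simpa using this

theorem exists_isBoundedInverse_addA (hd : Dense (C.domain : Set E)) (hC : C.adjoint = -C)
    (hS : ReGE S c) (hc : 0 < c) :
    ∃ B : E →L[ℂ] E, ‖B‖ ≤ 1 / c ∧ IsBoundedInverse (addA S C) B := by
  have := (isClosed_range_addA hd hC hS hc).completeSpace_coe
  have hrange := Submodule.orthogonal_eq_bot_iff.1 (orthogonal_range_addA_eq_bot hd hC hS hc)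
  exact exists_isBoundedInverse_of_le_norm hc (le_norm_addA_apply hd hC hS)
    (LinearMap.range_eq_top.1 hrange)

end Coercive

section Compression

variable {E : Type*} [NormedAddCommGroup E] [InnerProductSpace ℂ E]

/-- The compression `P_K A ι_K` with domain `dom A ∩ K`; for `K = ran A` it is the paper's `Ã`. -/
def compression (A : E →ₗ.[ℂ] E) (K : Submodule ℂ E) [K.HasOrthogonalProjection] :
    K →ₗ.[ℂ] K where
  domain := A.domain.comap K.subtype
  toFun := K.orthogonalProjectionOnto.toLinearMap ∘ₗ A.toFun ∘ₗ
    K.subtype.restrict fun _ hx => hx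

variable {A : E →ₗ.[ℂ] E} {H₀ : Submodule ℂ E} [H₀.HasOrthogonalProjection]

omit [H₀.HasOrthogonalProjection] in
theorem exists_apply_eq_zero_of_mem (hker : H₀ ≤ (LinearMap.ker A.toFun).map A.domain.subtype)
    {x : E} (hx : x ∈ H₀) : ∃ hxA : x ∈ A.domain, A ⟨x, hxA⟩ = 0 := by
  obtain ⟨y, hy, rfl⟩ := hker hx
  exact ⟨y.2, hy⟩

theorem coe_compression_apply (hran : LinearMap.range A.toFun ≤ H₀ᗮ)
    (u : (compression A H₀ᗮ).domain) : (compression A H₀ᗮ u : E) = A ⟨u, u.2⟩ :=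
  Submodule.starProjection_eq_self_iff.2 (hran ⟨_, rfl⟩)

theorem exists_apply_orthogonalProjection_eq
    (hker : H₀ ≤ (LinearMap.ker A.toFun).map A.domain.subtype) (v : A.domain) :
    ∃ hv : (H₀ᗮ.orthogonalProjectionOnto v : E) ∈ A.domain,
      A ⟨H₀ᗮ.orthogonalProjectionOnto v, hv⟩ = A v := by
  obtain ⟨hv₀, hAv₀⟩ := exists_apply_eq_zero_of_mem hker (H₀.orthogonalProjectionOnto v).2
  have hsplit : (H₀ᗮ.orthogonalProjectionOnto v : E) = v - H₀.orthogonalProjectionOnto v :=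
    Submodule.starProjection_orthogonal_val _
  refine ⟨hsplit ▸ sub_mem v.2 hv₀, ?_⟩
  have hsplit' : (⟨_, hsplit ▸ sub_mem v.2 hv₀⟩ : A.domain) = v - ⟨_, hv₀⟩ := Subtype.ext hsplit
  rw [hsplit', LinearPMap.map_sub, hAv₀, sub_zero]

theorem dense_domain_compression (hd : Dense (A.domain : Set E))
    (hker : H₀ ≤ (LinearMap.ker A.toFun).map A.domain.subtype) :
    Dense ((compression A H₀ᗮ).domain : Set H₀ᗮ) := by
  have hsurj : DenseRange (H₀ᗮ.orthogonalProjectionOnto) := fun u =>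
    subset_closure ⟨u, Submodule.orthogonalProjectionOnto_mem_subspace_eq_self u⟩
  refine (hsurj.dense_image H₀ᗮ.orthogonalProjectionOnto.continuous hd).mono ?_
  rintro _ ⟨v, hv, rfl⟩
  exact (exists_apply_orthogonalProjection_eq hker ⟨v, hv⟩).1

theorem adjoint_compression_eq_neg [CompleteSpace E] (hd : Dense (A.domain : Set E))
    (hA : A.adjoint = -A) (hker : H₀ ≤ (LinearMap.ker A.toFun).map A.domain.subtype)
    (hran : LinearMap.range A.toFun ≤ H₀ᗮ) :
    (compression A H₀ᗮ).adjoint = -compression A H₀ᗮ := by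
  have hdc := dense_domain_compression hd hker
  have hmax : ∀ x : (compression A H₀ᗮ).adjoint.domain, ∃ hx : ((x : H₀ᗮ) : E) ∈ A.domain,
      A ⟨x, hx⟩ = -((compression A H₀ᗮ).adjoint x : E) := by
    refine fun x => SkewAdjoint.exists_apply_eq_neg hd hA fun v => ?_
    obtain ⟨hv, hAv⟩ := exists_apply_orthogonalProjection_eq hker v
    calc inner ℂ ((compression A H₀ᗮ).adjoint x : E) (v : E)
        = inner ℂ ((compression A H₀ᗮ).adjoint x) (H₀ᗮ.orthogonalProjectionOnto v) :=
          (Submodule.inner_orthogonalProjectionOnto_eq_of_mem_left _ _).symm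
      _ = inner ℂ (x : H₀ᗮ) (compression A H₀ᗮ ⟨_, hv⟩) :=
          LinearPMap.adjoint_isFormalAdjoint hdc x ⟨_, hv⟩
      _ = inner ℂ ((x : H₀ᗮ) : E) (A v) := by
          rw [Submodule.coe_inner, coe_compression_apply hran, ← hAv]
  refine le_antisymm (LinearPMap.le_of_eqLocus_ge fun x hx => ?_)
    (LinearPMap.IsFormalAdjoint.le_adjoint hdc fun x y => ?_)
  · obtain ⟨hxA, hAx⟩ := hmax ⟨x, hx⟩
    refine ⟨hx, hxA, Subtype.ext ?_⟩
    rw [LinearPMap.neg_apply, Submodule.coe_neg, coe_compression_apply hran]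
    exact (neg_eq_iff_eq_neg.2 hAx).symm
  · rw [LinearPMap.neg_apply, inner_neg_right, Submodule.coe_inner, Submodule.coe_inner,
      coe_compression_apply hran, coe_compression_apply hran]
    exact SkewAdjoint.inner_apply_left hd hA ⟨x, x.2⟩ ⟨y, y.2⟩

end Compression

section Schur

variable {E : Type*} [NormedAddCommGroup E] [InnerProductSpace ℂ E]
  {H₀ : Submodule ℂ E} [CompleteSpace H₀] {T : E →L[ℂ] E}

theorem orthogonalProjectionOnto_coe_add (a : H₀) (b : H₀ᗮ) :
    H₀.orthogonalProjectionOnto ((a : E) + b) = a := by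
  rw [map_add, Submodule.orthogonalProjectionOnto_mem_subspace_eq_self,
    Submodule.orthogonalProjectionOnto_apply_of_mem_orthogonal b.2, add_zero]

theorem orthogonalProjectionOnto_orthogonal_coe_add (a : H₀) (b : H₀ᗮ) :
    H₀ᗮ.orthogonalProjectionOnto ((a : E) + b) = b := by
  rw [map_add, Submodule.orthogonalProjectionOnto_mem_subspace_eq_self,
    Submodule.orthogonalProjectionOnto_apply_of_mem_orthogonal
      (H₀.le_orthogonal_orthogonal a.2), zero_add]

theorem schur00_blk00_apply (hT00 : IsUnit (blk00 H₀ T)) (a : H₀) :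
    schur00 H₀ T (blk00 H₀ T a) = a :=
  congr($(Ring.inverse_mul_cancel _ hT00) a)

theorem blk00_schur00_apply (hT00 : IsUnit (blk00 H₀ T)) (a : H₀) :
    blk00 H₀ T (schur00 H₀ T a) = a :=
  congr($(Ring.mul_inverse_cancel _ hT00) a)

theorem schur00_blk00_add_blk01 (hT00 : IsUnit (blk00 H₀ T)) (a : H₀) (b : H₀ᗮ) :
    schur00 H₀ T (blk00 H₀ T a + blk01 H₀ T b) = a + schur01 H₀ T b := by
  rw [map_add, schur00_blk00_apply hT00]
  rfl

theorem blk10_add_blk11_sub_schur10 (hT00 : IsUnit (blk00 H₀ T)) (a : H₀) (b : H₀ᗮ) :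
    blk10 H₀ T a + blk11 H₀ T b - schur10 H₀ T (blk00 H₀ T a + blk01 H₀ T b) =
      schur11 H₀ T b := by
  rw [schur10, ContinuousLinearMap.comp_apply, schur00_blk00_add_blk01 hT00, map_add]
  simp only [schur11, schur01, sub_apply, comp_apply]
  abel

variable (H₀ T) in
def schurBlockInverse (B : H₀ᗮ →L[ℂ] H₀ᗮ) : E →L[ℂ] E :=
  H₀.subtypeL ∘L
      (schur00 H₀ T + schur01 H₀ T ∘L B ∘L schur10 H₀ T) ∘L
      (Submodule.orthogonalProjectionOnto H₀) +
    H₀.subtypeL ∘L (-(schur01 H₀ T ∘L B)) ∘L (Submodule.orthogonalProjectionOnto H₀ᗮ) +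
    H₀ᗮ.subtypeL ∘L (-(B ∘L schur10 H₀ T)) ∘L (Submodule.orthogonalProjectionOnto H₀) +
    H₀ᗮ.subtypeL ∘L B ∘L (Submodule.orthogonalProjectionOnto H₀ᗮ)

theorem schurBlockInverse_apply (B : H₀ᗮ →L[ℂ] H₀ᗮ) (g : E) :
    let z := H₀ᗮ.orthogonalProjectionOnto g - schur10 H₀ T (H₀.orthogonalProjectionOnto g)
    schurBlockInverse H₀ T B g =
      ((schur00 H₀ T (H₀.orthogonalProjectionOnto g) - schur01 H₀ T (B z) : H₀) : E) + B z := by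
  simp only [schurBlockInverse, add_apply, comp_apply, neg_apply, Submodule.subtypeL_apply,
    map_sub, Submodule.coe_add, Submodule.coe_neg, Submodule.coe_sub]
  abel

theorem addA_apply_coe_add {A : E →ₗ.[ℂ] E}
    (hker : H₀ ≤ (LinearMap.ker A.toFun).map A.domain.subtype)
    (hran : LinearMap.range A.toFun ≤ H₀ᗮ) {u : (addA T A).domain} (a : H₀)
    (b : (compression A H₀ᗮ).domain) (hu : (u : E) = a + (b : H₀ᗮ)) :
    addA T A u = ((blk00 H₀ T a + blk01 H₀ T b : H₀) : E) +
      (blk10 H₀ T a + blk11 H₀ T b + compression A H₀ᗮ b : H₀ᗮ) := by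
  obtain ⟨u, hab⟩ := u
  subst hu
  obtain ⟨ha, hAa⟩ := exists_apply_eq_zero_of_mem hker a.2
  have hA : A ⟨_, mem_domain_addA.1 hab⟩ = compression A H₀ᗮ b := by
    have hsplit : (⟨_, mem_domain_addA.1 hab⟩ : A.domain) = ⟨a, ha⟩ + ⟨b, b.2⟩ := rfl
    rw [coe_compression_apply hran, hsplit, LinearPMap.map_add, hAa, zero_add]
  have hT : T ((a : E) + (b : H₀ᗮ)) = ((blk00 H₀ T a + blk01 H₀ T b : H₀) : E) +
      (blk10 H₀ T a + blk11 H₀ T b : H₀ᗮ) := by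
    rw [← Submodule.starProjection_add_starProjection_orthogonal (K := H₀) (T _)]
    simp only [Submodule.starProjection_apply, map_add]
    rfl
  rw [addA_apply, hA, hT, Submodule.coe_add (_ + _)]
  abel

theorem isBoundedInverse_addA_schurBlockInverse {A : E →ₗ.[ℂ] E}
    (hker : H₀ ≤ (LinearMap.ker A.toFun).map A.domain.subtype)
    (hran : LinearMap.range A.toFun ≤ H₀ᗮ) (hT00 : IsUnit (blk00 H₀ T)) {B : H₀ᗮ →L[ℂ] H₀ᗮ}
    (hB : IsBoundedInverse (addA (schur11 H₀ T) (compression A H₀ᗮ)) B) :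
    IsBoundedInverse (addA T A) (schurBlockInverse H₀ T B) := by
  constructor
  · intro u
    obtain ⟨hu₁, -⟩ := exists_apply_orthogonalProjection_eq hker ⟨u, mem_domain_addA.1 u.2⟩
    set u₀ := H₀.orthogonalProjectionOnto u
    let u₁ : (compression A H₀ᗮ).domain := ⟨H₀ᗮ.orthogonalProjectionOnto u, hu₁⟩
    have hu : (u : E) = u₀ + (u₁ : H₀ᗮ) :=
      (Submodule.starProjection_add_starProjection_orthogonal (K := H₀) u).symm
    have hBu₁ : B (schur11 H₀ T u₁ + compression A H₀ᗮ u₁) = u₁ :=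
      hB.1 ⟨u₁, mem_domain_addA.2 u₁.2⟩
    rw [schurBlockInverse_apply, addA_apply_coe_add hker hran u₀ u₁ hu,
      orthogonalProjectionOnto_coe_add, orthogonalProjectionOnto_orthogonal_coe_add,
      add_sub_right_comm, blk10_add_blk11_sub_schur10 hT00, hBu₁, schur00_blk00_add_blk01 hT00,
      add_sub_cancel_right, hu]
  · intro g
    set z := H₀ᗮ.orthogonalProjectionOnto g - schur10 H₀ T (H₀.orthogonalProjectionOnto g)
    obtain ⟨hq, hBz⟩ := hB.2 z
    let q : (compression A H₀ᗮ).domain := ⟨B z, mem_domain_addA.1 hq⟩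
    set p := schur00 H₀ T (H₀.orthogonalProjectionOnto g) - schur01 H₀ T (B z)
    have hRg : schurBlockInverse H₀ T B g = p + (B z : E) := schurBlockInverse_apply B g
    have hmem : schurBlockInverse H₀ T B g ∈ (addA T A).domain := by
      rw [hRg]
      exact mem_domain_addA.2 (add_mem (exists_apply_eq_zero_of_mem hker p.2).1 q.2)
    refine ⟨hmem, ?_⟩
    have h₀ : blk00 H₀ T p + blk01 H₀ T q = H₀.orthogonalProjectionOnto g := by
      rw [map_sub, schur01, comp_apply, blk00_schur00_apply hT00, blk00_schur00_apply hT00,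
        sub_add_cancel]
    have h₁ : blk10 H₀ T p + blk11 H₀ T q + compression A H₀ᗮ q =
        H₀ᗮ.orthogonalProjectionOnto g := by
      have hS := blk10_add_blk11_sub_schur10 hT00 p q
      rw [h₀] at hS
      calc blk10 H₀ T p + blk11 H₀ T q + compression A H₀ᗮ q
          = schur11 H₀ T q + compression A H₀ᗮ q +
              schur10 H₀ T (H₀.orthogonalProjectionOnto g) := by
            rw [← hS]
            abel
        _ = H₀ᗮ.orthogonalProjectionOnto g := by
            rw [show schur11 H₀ T q + compression A H₀ᗮ q = z from hBz, sub_add_cancel]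
    rw [addA_apply_coe_add hker hran p q hRg, h₀, h₁]
    exact Submodule.starProjection_add_starProjection_orthogonal g

end Schur

/-- Let `A` be skew-selfadjoint with `H₀ = ker A` and
`H₀ᗮ = ran A`, and `T ∈ L(H)` with `T₀₀` boundedly invertible and
`Re (T₁₁ − T₁₀T₀₀⁻¹T₀₁) ≥ c > 0`. Then `T_A = T₁₁ − T₁₀T₀₀⁻¹T₀₁ + Ã` (with domain
`dom(A) ∩ H₁`) is boundedly invertible with `‖T_A⁻¹‖ ≤ 1/c` and
`‖Ã T_A⁻¹‖ ≤ 1 + ‖T₁₁ − T₁₀T₀₀⁻¹T₀₁‖/c`, and `T + A` (with domain `dom(A)`) is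
boundedly invertible with the stated blockwise inverse. -/
theorem statement_12
    (A : H →ₗ.[ℂ] H) (hdense : Dense (A.domain : Set H)) (hskew : A.adjoint = -A)
    (H₀ : Submodule ℂ H) [CompleteSpace H₀]
    (hker : H₀ = (LinearMap.ker A.toFun).map A.domain.subtype)
    (hran : H₀ᗮ = LinearMap.range A.toFun)
    (T : H →L[ℂ] H) (c : ℝ) (hc : 0 < c)
    (hT00 : IsUnit (blk00 H₀ T)) (hs11 : ReGE (schur11 H₀ T) c) :
    ∃ B : ↥H₀ᗮ →L[ℂ] ↥H₀ᗮ,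
      ‖B‖ ≤ 1 / c ∧
      -- left inverse of `T_A` on `dom(A) ∩ H₁`
      (∀ (u : ↥H₀ᗮ) (hu : (u : H) ∈ A.domain),
        B (schur11 H₀ T u + Submodule.orthogonalProjectionOnto H₀ᗮ (A ⟨(u : H), hu⟩)) = u) ∧
      -- right inverse of `T_A`, together with the bound on `‖Ã T_A⁻¹‖`
      (∃ hmem : ∀ y : ↥H₀ᗮ, ((B y : ↥H₀ᗮ) : H) ∈ A.domain,
        (∀ y : ↥H₀ᗮ,
          schur11 H₀ T (B y) + Submodule.orthogonalProjectionOnto H₀ᗮ (A ⟨((B y : ↥H₀ᗮ) : H), hmem y⟩)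
            = y) ∧
        (∀ y : ↥H₀ᗮ,
          ‖A ⟨((B y : ↥H₀ᗮ) : H), hmem y⟩‖ ≤ (1 + ‖schur11 H₀ T‖ / c) * ‖y‖)) ∧
      -- `T + A` is boundedly invertible with the blockwise inverse
      IsBoundedInverse (addA T A)
        (H₀.subtypeL ∘L
            (schur00 H₀ T + schur01 H₀ T ∘L B ∘L schur10 H₀ T) ∘L
            (Submodule.orthogonalProjectionOnto H₀) +
          H₀.subtypeL ∘L (-(schur01 H₀ T ∘L B)) ∘L (Submodule.orthogonalProjectionOnto H₀ᗮ) +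
          H₀ᗮ.subtypeL ∘L (-(B ∘L schur10 H₀ T)) ∘L (Submodule.orthogonalProjectionOnto H₀) +
          H₀ᗮ.subtypeL ∘L B ∘L (Submodule.orthogonalProjectionOnto H₀ᗮ)) := by
  have hd : Dense ((compression A H₀ᗮ).domain : Set H₀ᗮ) := dense_domain_compression hdense hker.le
  have hC : (compression A H₀ᗮ).adjoint = -compression A H₀ᗮ :=
    adjoint_compression_eq_neg hdense hskew hker.le hran.ge
  obtain ⟨B, hBc, hB⟩ := exists_isBoundedInverse_addA hd hC hs11 hc
  have hmem : ∀ y, ((B y : H₀ᗮ) : H) ∈ A.domain := fun y => (hB.2 y).fst.2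
  refine ⟨B, hBc, fun u hu => hB.1 ⟨u, mem_domain_addA.2 hu⟩,
    ⟨hmem, fun y => (hB.2 y).2, fun y => ?_⟩,
    isBoundedInverse_addA_schurBlockInverse hker.le hran.ge hT00 hB⟩
  rw [← coe_compression_apply hran.ge ⟨B y, hmem y⟩, Submodule.coe_norm]
  exact norm_apply_le_of_isBoundedInverse_addA hB hBc y (hmem y)

end Paper
end
end

section
/- Let H be a complex Hilbert space, 0 < α < β, c > 0, and a₁, a₂, a₃ ∈ L(H) with ‖a_i‖ ≤ β for i = 1,2,3. Let (R_r)_{0≤r≤1} be a family in L(H) with K := sup_{0≤r≤1} ‖R_r‖ < ∞ and R_r → Id in the strong operator topology as r → 0 (an approximation of unity). Assume Re(a₁ − a₂ R_r a₃) ≥ c for all r ∈ [0,1]. Then for every r ∈ [0,1] the operator A_r := a₁ − a₂ R_r a₃ is boundedly invertible with ‖A_r⁻¹‖ ≤ 1/c and Re A_r⁻¹ ≥ c (β + β² K)⁻², and A_r⁻¹ converges to A₀⁻¹ in the strong operator topology as r → 0. -/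
/-!
Coercivity `Re A ≥ c` gives `c‖φ‖ ≤ ‖Aφ‖`, so `A` is injective with closed range, and its range
has trivial orthogonal complement; hence `A` is invertible with `‖A⁻¹‖ ≤ 1/c`. Writing `ψ = Aφ`,
`Re⟨A⁻¹ψ, ψ⟩ = Re⟨Aφ, φ⟩ ≥ c‖φ‖² ≥ c‖A‖⁻²‖ψ‖²`, and `‖A_r‖ ≤ β + β²K`. Finally, with
`χ = A₀⁻¹ψ`, the uniform lower bound gives `c‖A_r⁻¹ψ - χ‖ ≤ ‖ψ - A_r χ‖ = ‖(A₀ - A_r)χ‖ → 0`.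
-/

noncomputable section
open Filter Topology ContinuousLinearMap

namespace Paper

lemma norm_sub_comp_comp_le {𝕜 E : Type*} [NontriviallyNormedField 𝕜] [SeminormedAddCommGroup E]
    [NormedSpace 𝕜 E] {a₁ a₂ a₃ S : E →L[𝕜] E} {β K : ℝ} (h₁ : ‖a₁‖ ≤ β) (h₂ : ‖a₂‖ ≤ β)
    (h₃ : ‖a₃‖ ≤ β) (hS : ‖S‖ ≤ K) : ‖a₁ - a₂ ∘L S ∘L a₃‖ ≤ β + β ^ 2 * K := by
  have hβ : 0 ≤ β := (norm_nonneg _).trans h₁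
  have hK : 0 ≤ K := (norm_nonneg _).trans hS
  have hcomp : ‖a₂ ∘L S ∘L a₃‖ ≤ ‖a₂‖ * (‖S‖ * ‖a₃‖) :=
    (opNorm_comp_le _ _).trans (mul_le_mul_of_nonneg_left (opNorm_comp_le _ _) (norm_nonneg _))
  calc ‖a₁ - a₂ ∘L S ∘L a₃‖ ≤ ‖a₁‖ + ‖a₂‖ * (‖S‖ * ‖a₃‖) := (norm_sub_le _ _).trans (by gcongr)
    _ ≤ β + β * (K * β) := by gcongr
    _ = β + β ^ 2 * K := by ring

lemma apply_ring_inverse_apply {𝕜 E : Type*} [NontriviallyNormedField 𝕜] [NormedAddCommGroup E]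
    [NormedSpace 𝕜 E] {T : E →L[𝕜] E} (hT : IsUnit T) (ψ : E) : T (Ring.inverse T ψ) = ψ :=
  DFunLike.congr_fun (Ring.mul_inverse_cancel T hT) ψ

section

variable {H : Type*} [NormedAddCommGroup H] [InnerProductSpace ℂ H]

namespace ReGE

variable {T : H →L[ℂ] H} {c : ℝ}

lemma mul_norm_le_norm_apply (h : ReGE T c) (φ : H) : c * ‖φ‖ ≤ ‖T φ‖ := by
  rcases (norm_nonneg φ).eq_or_lt with hφ | hφ
  · simp [← hφ]
  refine le_of_mul_le_mul_right ?_ hφ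
  calc c * ‖φ‖ * ‖φ‖ = c * ‖φ‖ ^ 2 := by ring
    _ ≤ (inner ℂ (T φ) φ : ℂ).re := h φ
    _ ≤ ‖T φ‖ * ‖φ‖ := (Complex.re_le_norm _).trans (norm_inner_le_norm _ _)

lemma isUnit_s19 [CompleteSpace H] (h : ReGE T c) (hc : 0 < c) : IsUnit T :=
  isUnit_of_forall_le_norm_inner_map T (c := ⟨c, hc.le⟩) hc fun φ =>
    (mul_comm _ _).trans_le ((h φ).trans (Complex.re_le_norm _))

lemma norm_ring_inverse_le [CompleteSpace H] (h : ReGE T c) (hc : 0 < c) :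
    ‖Ring.inverse T‖ ≤ c⁻¹ := by
  refine opNorm_le_bound _ (inv_nonneg.mpr hc.le) fun ψ => ?_
  rw [inv_mul_eq_div, le_div_iff₀' hc]
  simpa only [apply_ring_inverse_apply (h.isUnit_s19 hc)] using
    h.mul_norm_le_norm_apply (Ring.inverse T ψ)

lemma ring_inverse [CompleteSpace H] (h : ReGE T c) (hc : 0 < c) {M : ℝ} (hM : ‖T‖ ≤ M) :
    ReGE (Ring.inverse T) (c * (M⁻¹) ^ 2) := by
  intro ψ
  set φ := Ring.inverse T ψ
  have hψ : T φ = ψ := apply_ring_inverse_apply (h.isUnit_s19 hc) ψ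
  have hM₀ : 0 ≤ M := (norm_nonneg T).trans hM
  have hφ : M⁻¹ * ‖ψ‖ ≤ ‖φ‖ := by
    rcases hM₀.eq_or_lt with rfl | hMpos
    · simp
    · rw [inv_mul_le_iff₀ hMpos, ← hψ]
      exact (T.le_opNorm φ).trans (by gcongr)
  have hre : (inner ℂ φ ψ : ℂ).re = (inner ℂ (T φ) φ : ℂ).re := by
    rw [← hψ, ← inner_conj_symm, Complex.conj_re]
  calc c * (M⁻¹) ^ 2 * ‖ψ‖ ^ 2 = c * (M⁻¹ * ‖ψ‖) ^ 2 := by ring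
    _ ≤ c * ‖φ‖ ^ 2 := by gcongr
    _ ≤ (inner ℂ (T φ) φ : ℂ).re := h φ
    _ = (inner ℂ φ ψ : ℂ).re := hre.symm

lemma tendsto_ring_inverse_apply [CompleteSpace H] {ι : Type*} {l : Filter ι}
    {A : ι → H →L[ℂ] H} {A₀ : H →L[ℂ] H} (hc : 0 < c) (hA : ∀ᶠ i in l, ReGE (A i) c)
    (hA₀ : IsUnit A₀) (hlim : ∀ φ, Tendsto (fun i => A i φ) l (𝓝 (A₀ φ))) (ψ : H) :
    Tendsto (fun i => Ring.inverse (A i) ψ) l (𝓝 (Ring.inverse A₀ ψ)) := by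
  set χ := Ring.inverse A₀ ψ
  have hχ : A₀ χ = ψ := apply_ring_inverse_apply hA₀ ψ
  have hbound : ∀ᶠ i in l, ‖Ring.inverse (A i) ψ - χ‖ ≤ c⁻¹ * ‖A i χ - A₀ χ‖ := by
    filter_upwards [hA] with i hi
    rw [← div_eq_inv_mul, le_div_iff₀' hc]
    calc c * ‖Ring.inverse (A i) ψ - χ‖ ≤ ‖A i (Ring.inverse (A i) ψ - χ)‖ :=
          hi.mul_norm_le_norm_apply _
      _ = ‖A i χ - A₀ χ‖ := by
          rw [map_sub, apply_ring_inverse_apply (hi.isUnit_s19 hc), hχ, norm_sub_rev]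
  have hsmall : Tendsto (fun i => c⁻¹ * ‖A i χ - A₀ χ‖) l (𝓝 0) := by
    simpa using ((tendsto_iff_norm_sub_tendsto_zero.mp (hlim χ)).const_mul c⁻¹)
  exact tendsto_iff_norm_sub_tendsto_zero.mpr (squeeze_zero' (Eventually.of_forall fun _ =>
    norm_nonneg _) hbound hsmall)

end ReGE

end

variable {H : Type*} [NormedAddCommGroup H] [InnerProductSpace ℂ H] [CompleteSpace H]

theorem statement_19_general (β c K : ℝ) (hc : 0 < c)
    (a₁ a₂ a₃ : H →L[ℂ] H) (hb1 : ‖a₁‖ ≤ β) (hb2 : ‖a₂‖ ≤ β) (hb3 : ‖a₃‖ ≤ β)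
    (R : ℝ → H →L[ℂ] H)
    (hK : ∀ r ∈ Set.Icc (0:ℝ) 1, ‖R r‖ ≤ K)
    (hunity : ∀ φ : H, Tendsto (fun r => R r φ) (𝓝[Set.Icc (0:ℝ) 1] 0) (𝓝 φ))
    (hacc : ∀ r ∈ Set.Icc (0:ℝ) 1, ReGE (a₁ - a₂ ∘L R r ∘L a₃) c) :
    (∀ r ∈ Set.Icc (0:ℝ) 1,
      IsUnit (a₁ - a₂ ∘L R r ∘L a₃) ∧
      ‖Ring.inverse (a₁ - a₂ ∘L R r ∘L a₃)‖ ≤ 1 / c ∧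
      ReGE (Ring.inverse (a₁ - a₂ ∘L R r ∘L a₃)) (c * ((β + β ^ 2 * K)⁻¹) ^ 2)) ∧
    ∀ φ : H, Tendsto (fun r => Ring.inverse (a₁ - a₂ ∘L R r ∘L a₃) φ)
      (𝓝[Set.Icc (0:ℝ) 1] 0) (𝓝 (Ring.inverse (a₁ - a₂ ∘L R 0 ∘L a₃) φ)) := by
  have h₀ : (0:ℝ) ∈ Set.Icc (0:ℝ) 1 := ⟨le_rfl, zero_le_one⟩
  have hR₀ : ∀ φ, R 0 φ = φ := fun φ =>
    tendsto_nhds_unique (tendsto_pure_nhds _ 0) ((hunity φ).mono_left (pure_le_nhdsWithin h₀))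
  refine ⟨fun r hr => ⟨(hacc r hr).isUnit_s19 hc, ?_, (hacc r hr).ring_inverse hc
    (norm_sub_comp_comp_le hb1 hb2 hb3 (hK r hr))⟩, ?_⟩
  · simpa only [one_div] using (hacc r hr).norm_ring_inverse_le hc
  refine ReGE.tendsto_ring_inverse_apply hc (eventually_mem_nhdsWithin.mono hacc)
    ((hacc 0 h₀).isUnit_s19 hc) fun φ => ?_
  simpa only [sub_apply, comp_apply, Function.comp_apply, hR₀] using
    ((a₂.continuous.tendsto _).comp (hunity (a₃ φ))).const_sub (a₁ φ)

/-- **cell migration model.** Given `a₁,a₂,a₃` with `‖aᵢ‖ ≤ β`, an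
approximation of unity `(R_r)_{0≤r≤1}` with bound `K` and `Re(a₁ − a₂R_r a₃) ≥ c` for all
`r ∈ [0,1]`, each `A_r := a₁ − a₂R_r a₃` is boundedly invertible with `‖A_r⁻¹‖ ≤ 1/c` and
`Re A_r⁻¹ ≥ c(β+β²K)⁻²`, and `A_r⁻¹ → A₀⁻¹` in the strong operator topology as `r → 0`. -/
theorem statement_19 (α β c K : ℝ) (hα : 0 < α) (hαβ : α < β) (hc : 0 < c)
    (a₁ a₂ a₃ : H →L[ℂ] H) (hb1 : ‖a₁‖ ≤ β) (hb2 : ‖a₂‖ ≤ β) (hb3 : ‖a₃‖ ≤ β)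
    (R : ℝ → H →L[ℂ] H)
    (hK : ∀ r ∈ Set.Icc (0:ℝ) 1, ‖R r‖ ≤ K)
    (hunity : ∀ φ : H, Tendsto (fun r => R r φ) (𝓝[Set.Icc (0:ℝ) 1] 0) (𝓝 φ))
    (hacc : ∀ r ∈ Set.Icc (0:ℝ) 1, ReGE (a₁ - a₂ ∘L R r ∘L a₃) c) :
    (∀ r ∈ Set.Icc (0:ℝ) 1,
      IsUnit (a₁ - a₂ ∘L R r ∘L a₃) ∧
      ‖Ring.inverse (a₁ - a₂ ∘L R r ∘L a₃)‖ ≤ 1 / c ∧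
      ReGE (Ring.inverse (a₁ - a₂ ∘L R r ∘L a₃)) (c * ((β + β ^ 2 * K)⁻¹) ^ 2)) ∧
    ∀ φ : H, Tendsto (fun r => Ring.inverse (a₁ - a₂ ∘L R r ∘L a₃) φ)
      (𝓝[Set.Icc (0:ℝ) 1] 0) (𝓝 (Ring.inverse (a₁ - a₂ ∘L R 0 ∘L a₃) φ)) :=
  statement_19_general β c K hc a₁ a₂ a₃ hb1 hb2 hb3 R hK hunity hacc

end Paper
end
end
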